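/- arXiv:2405.11630 — 6 statements merged into one kernel-verified Lean document; each statement's English description precedes it below -/
import Mathlib

section
/- Let p ≥ 1, N ≥ 1, and 0 ≤ r ≤ p-1. Suppose R(x) = Σ_{l=0}^{N} R_l x^l is a p×p matrix polynomial whose leading coefficient R_N has the block form [[0_{(p-r)×r}, t_N],[0_{r×r}, 0_{r×(p-r)}]] with t_N an invertible upper triangular (p-r)×(p-r) matrix, and whose subleading coefficient R_{N-1} has block form [[R¹_{N-1}, R²_{N-1}],[t_{N-1}, R⁴_{N-1}]] with t_{N-1} an invertible upper triangular r×r matrix. Suppose R̂(x) is another p×p matrix polynomial of the same degree N satisfying the same block conditions, and suppose R̂(x) = R(x)·𝒜(x) for some matrix polynomial 𝒜(x). Then 𝒜(x) is constant in x (degree zero), upper triangular, and invertible. -/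
/-!
Multiplying on the left by `D(x) = diag(I_{p-r}, x I_r)` replaces the last `r` rows of the
`N`-th coefficient by those of the `(N-1)`-st, and kills everything above degree `N`. After
moving those `r` rows to the top, the `N`-th coefficient of `D R` becomes
`[[t_{N-1}, R⁴_{N-1}], [0, t_N]]`: upper triangular with nonzero diagonal, hence invertible.
Since `D R̂ = (D R) 𝒜` still has degree at most `N`, an invertible leading coefficient of `D R`
forces `𝒜 = 𝒜₀` to be constant, and then `Û = U 𝒜₀` for the two upper triangular invertible
matrices `U`, `Û` shows that `𝒜₀ = U⁻¹ Û` is upper triangular and invertible.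
-/

open Polynomial Matrix

theorem Polynomial.natDegree_eq_zero_of_natDegree_mul_le {S : Type*} [Semiring S] {P A : S[X]}
    {N : ℕ} (hP : P.natDegree ≤ N) (hreg : IsLeftRegular (P.coeff N))
    (hPA : (P * A).natDegree ≤ N) : A.natDegree = 0 := by
  by_contra hA
  have hlead : P.coeff N * A.leadingCoeff = 0 := by
    rw [leadingCoeff, ← coeff_mul_add_eq_of_natDegree_le hP le_rfl]
    exact coeff_eq_zero_of_natDegree_lt (by omega)
  exact hA (by rw [leadingCoeff_eq_zero.mp (hreg (hlead.trans (mul_zero _).symm)), natDegree_zero])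

namespace Matrix

theorem isLeftRegular_of_isUnit_submatrix {n α : Type*} [Fintype n] [DecidableEq n] [Semiring α]
    {M : Matrix n n α} {σ : n → n} (h : IsUnit (M.submatrix σ id)) : IsLeftRegular M := by
  intro B B' hB
  have hσ := congrArg (·.submatrix σ id) hB
  simp only [submatrix_mul _ _ σ id id Function.bijective_id, submatrix_id_id] at hσ
  exact h.mul_left_cancel hσ

variable {n K : Type*} [Fintype n] [DecidableEq n] [LinearOrder n] [Field K]

theorem IsUpperTriangular.isUnit {U : Matrix n n K} (hU : U.IsUpperTriangular)
    (hdiag : ∀ i, U i i ≠ 0) : IsUnit U := by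
  rw [isUnit_iff_isUnit_det, det_of_isUpperTriangular hU, isUnit_iff_ne_zero]
  exact Finset.prod_ne_zero_iff.mpr fun i _ => hdiag i

theorem isUpperTriangular_and_isUnit_of_mul_eq {U V A : Matrix n n K}
    (hU : U.IsUpperTriangular) (hV : V.IsUpperTriangular) (hUu : IsUnit U) (hVu : IsUnit V)
    (h : V = U * A) : A.IsUpperTriangular ∧ IsUnit A := by
  have := hUu.invertible
  refine ⟨?_, isUnit_of_mul_isUnit_right (h ▸ hVu)⟩
  rw [← inv_mul_cancel_left_of_invertible U A, ← h]
  exact (blockTriangular_inv_of_blockTriangular hU).mul hV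

end Matrix

section BlockShape

variable {K : Type*} [Semiring K] {p r : ℕ}

/-- The row of the `N`-th coefficient of `scaleLastRowsByX K p r * R` whose first nonzero entry
should sit in column `c`: the last `r` rows serve the first `r` columns, the first `p - r` rows
the rest. -/
def pivotRow (hrp : r ≤ p) (c : Fin p) : Fin p :=
  if h : (c : ℕ) < r then ⟨c + (p - r), by omega⟩ else ⟨c - r, by omega⟩

noncomputable def scaleLastRowsByX (K : Type*) [Semiring K] (p r : ℕ) :
    (Matrix (Fin p) (Fin p) K)[X] :=
  C (diagonal fun i : Fin p => if (i : ℕ) < p - r then 1 else 0) +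
    X * C (diagonal fun i : Fin p => if (i : ℕ) < p - r then 0 else 1)

theorem coeff_scaleLastRowsByX_mul (R : (Matrix (Fin p) (Fin p) K)[X]) (l : ℕ) (i j : Fin p) :
    (scaleLastRowsByX K p r * R).coeff (l + 1) i j =
      if (i : ℕ) < p - r then R.coeff (l + 1) i j else R.coeff l i j := by
  rw [scaleLastRowsByX, add_mul, coeff_add, mul_assoc, coeff_C_mul, coeff_X_mul, coeff_C_mul]
  split_ifs <;> simp [diagonal_mul, *]

theorem natDegree_scaleLastRowsByX_mul_le {N : ℕ} {R : (Matrix (Fin p) (Fin p) K)[X]}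
    (hdeg : ∀ l, N < l → R.coeff l = 0)
    (hlow : ∀ i j : Fin p, p - r ≤ (i : ℕ) → R.coeff N i j = 0) :
    (scaleLastRowsByX K p r * R).natDegree ≤ N := by
  rw [natDegree_le_iff_coeff_eq_zero]
  rintro (_ | l) hl
  · omega
  ext i j
  rw [coeff_scaleLastRowsByX_mul, hdeg _ hl]
  split_ifs with hi
  · rfl
  · obtain rfl | hlN := eq_or_lt_of_le (Nat.le_of_lt_succ hl)
    · exact hlow i j (by omega)
    · rw [hdeg l hlN]

/-- In the block notation of the statement this is `[[t_{N-1}, R⁴_{N-1}], [0, t_N]]`. -/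
noncomputable def pivotBlock (hrp : r ≤ p) (N : ℕ) (R : (Matrix (Fin p) (Fin p) K)[X]) :
    Matrix (Fin p) (Fin p) K :=
  ((scaleLastRowsByX K p r * R).coeff N).submatrix (pivotRow hrp) id

theorem pivotBlock_apply (hrp : r ≤ p) {N : ℕ} (hN : 1 ≤ N) (R : (Matrix (Fin p) (Fin p) K)[X])
    (c j : Fin p) :
    pivotBlock hrp N R c j =
      if (c : ℕ) < r then R.coeff (N - 1) (pivotRow hrp c) j
      else R.coeff N (pivotRow hrp c) j := by
  obtain ⟨N, rfl⟩ := Nat.exists_eq_add_of_le' hN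
  rw [pivotBlock, submatrix_apply, id, coeff_scaleLastRowsByX_mul, Nat.add_sub_cancel]
  unfold pivotRow
  split_ifs <;> first | rfl | (simp only at *; omega)

theorem pivotBlock_mul_C (hrp : r ≤ p) (N : ℕ) (R : (Matrix (Fin p) (Fin p) K)[X])
    (B : Matrix (Fin p) (Fin p) K) : pivotBlock hrp N (R * C B) = pivotBlock hrp N R * B := by
  rw [pivotBlock, pivotBlock, ← mul_assoc, coeff_mul_C,
    submatrix_mul _ _ _ id _ Function.bijective_id, submatrix_id_id]

theorem pivotBlock_isUpperTriangular (hrp : r ≤ p) {N : ℕ} (hN : 1 ≤ N)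
    {R : (Matrix (Fin p) (Fin p) K)[X]}
    (hN0 : ∀ i j : Fin p, ((j : ℕ) < (i : ℕ) + r ∨ p - r ≤ (i : ℕ)) → R.coeff N i j = 0)
    (hN1z : ∀ i j : Fin p, (j : ℕ) < r → (j : ℕ) + (p - r) < (i : ℕ) →
      R.coeff (N - 1) i j = 0) :
    (pivotBlock hrp N R).IsUpperTriangular := by
  intro c j hjc
  simp only [id] at hjc
  rw [pivotBlock_apply hrp hN]
  unfold pivotRow
  split_ifs with hc
  · exact hN1z _ _ (by omega) (by simp only; omega)
  · exact hN0 _ _ (Or.inl (by simp only; omega))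

theorem pivotBlock_apply_self_ne_zero (hrp : r ≤ p) {N : ℕ} (hN : 1 ≤ N)
    {R : (Matrix (Fin p) (Fin p) K)[X]}
    (hNd : ∀ i j : Fin p, (j : ℕ) = (i : ℕ) + r → R.coeff N i j ≠ 0)
    (hN1d : ∀ i j : Fin p, (j : ℕ) < r → (j : ℕ) + (p - r) = (i : ℕ) →
      R.coeff (N - 1) i j ≠ 0) (c : Fin p) :
    pivotBlock hrp N R c c ≠ 0 := by
  rw [pivotBlock_apply hrp hN]
  unfold pivotRow
  split_ifs with hc
  · exact hN1d _ _ hc rfl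
  · exact hNd _ _ (by simp only; omega)

end BlockShape

theorem stmt0_general (p N r : ℕ) (hN : 1 ≤ N) (hr : r ≤ p - 1)
    (R Rhat A : Polynomial (Matrix (Fin p) (Fin p) ℂ))
    -- `R` has degree `N`
    (hRdeg : ∀ l, N < l → R.coeff l = 0)
    -- leading coefficient of `R`: zero outside the upper-right block and below its diagonal
    (hRN0 : ∀ i j : Fin p, ((j : ℕ) < (i : ℕ) + r ∨ p - r ≤ (i : ℕ)) → R.coeff N i j = 0)
    -- the upper-right triangular block `t_N` has nonzero diagonal (hence invertible)
    (hRNd : ∀ i j : Fin p, (j : ℕ) = (i : ℕ) + r → R.coeff N i j ≠ 0)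
    -- subleading coefficient of `R`: lower-left block `t_{N-1}` is upper triangular
    (hRN1z : ∀ i j : Fin p, (j : ℕ) < r → (j : ℕ) + (p - r) < (i : ℕ) →
      R.coeff (N - 1) i j = 0)
    -- with nonzero diagonal (hence invertible)
    (hRN1d : ∀ i j : Fin p, (j : ℕ) < r → (j : ℕ) + (p - r) = (i : ℕ) →
      R.coeff (N - 1) i j ≠ 0)
    -- `R̂` has the same degree and satisfies the same block conditions
    (hRhdeg : ∀ l, N < l → Rhat.coeff l = 0)
    (hRhN0 : ∀ i j : Fin p, ((j : ℕ) < (i : ℕ) + r ∨ p - r ≤ (i : ℕ)) → Rhat.coeff N i j = 0)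
    (hRhNd : ∀ i j : Fin p, (j : ℕ) = (i : ℕ) + r → Rhat.coeff N i j ≠ 0)
    (hRhN1z : ∀ i j : Fin p, (j : ℕ) < r → (j : ℕ) + (p - r) < (i : ℕ) →
      Rhat.coeff (N - 1) i j = 0)
    (hRhN1d : ∀ i j : Fin p, (j : ℕ) < r → (j : ℕ) + (p - r) = (i : ℕ) →
      Rhat.coeff (N - 1) i j ≠ 0)
    -- the factorization `R̂(x) = R(x)·𝒜(x)`
    (hfact : Rhat = R * A) :
    A.natDegree = 0 ∧ (∀ i j : Fin p, (j : ℕ) < (i : ℕ) → A.coeff 0 i j = 0) ∧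
      IsUnit (A.coeff 0) := by
  have hrp : r ≤ p := hr.trans (Nat.sub_le p 1)
  have hUtri := pivotBlock_isUpperTriangular hrp hN hRN0 hRN1z
  have hVtri := pivotBlock_isUpperTriangular hrp hN hRhN0 hRhN1z
  have hU := hUtri.isUnit (pivotBlock_apply_self_ne_zero hrp hN hRNd hRN1d)
  have hV := hVtri.isUnit (pivotBlock_apply_self_ne_zero hrp hN hRhNd hRhN1d)
  have hdeg : A.natDegree = 0 := by
    refine natDegree_eq_zero_of_natDegree_mul_le
      (natDegree_scaleLastRowsByX_mul_le hRdeg fun i j hi => hRN0 i j (Or.inr hi))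
      (isLeftRegular_of_isUnit_submatrix hU) ?_
    rw [mul_assoc, ← hfact]
    exact natDegree_scaleLastRowsByX_mul_le hRhdeg fun i j hi => hRhN0 i j (Or.inr hi)
  have hVU : pivotBlock hrp N Rhat = pivotBlock hrp N R * A.coeff 0 := by
    rw [hfact, eq_C_of_natDegree_eq_zero hdeg, pivotBlock_mul_C, coeff_C_zero]
  obtain ⟨htri, hunit⟩ := isUpperTriangular_and_isUnit_of_mul_eq hUtri hVtri hU hV hVU
  exact ⟨hdeg, fun i j hij => htri hij, hunit⟩

/-- If `R` and `R̂` are `p×p` matrix polynomials of degree `N` whose leading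
coefficients have block form `[[0, t_N],[0,0]]` with `t_N` invertible upper triangular
`(p-r)×(p-r)`, and whose subleading coefficients have lower-left `r×r` block an invertible
upper triangular matrix, and `R̂ = R·𝒜`, then `𝒜` is constant, upper triangular and
invertible. -/
theorem stmt0 (p N r : ℕ) (hp : 1 ≤ p) (hN : 1 ≤ N) (hr : r ≤ p - 1)
    (R Rhat A : Polynomial (Matrix (Fin p) (Fin p) ℂ))
    -- `R` has degree `N`
    (hRdeg : ∀ l, N < l → R.coeff l = 0)
    -- leading coefficient of `R`: zero outside the upper-right block and below its diagonal
    (hRN0 : ∀ i j : Fin p, ((j : ℕ) < (i : ℕ) + r ∨ p - r ≤ (i : ℕ)) → R.coeff N i j = 0)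
    -- the upper-right triangular block `t_N` has nonzero diagonal (hence invertible)
    (hRNd : ∀ i j : Fin p, (j : ℕ) = (i : ℕ) + r → R.coeff N i j ≠ 0)
    -- subleading coefficient of `R`: lower-left block `t_{N-1}` is upper triangular
    (hRN1z : ∀ i j : Fin p, (j : ℕ) < r → (j : ℕ) + (p - r) < (i : ℕ) →
      R.coeff (N - 1) i j = 0)
    -- with nonzero diagonal (hence invertible)
    (hRN1d : ∀ i j : Fin p, (j : ℕ) < r → (j : ℕ) + (p - r) = (i : ℕ) →
      R.coeff (N - 1) i j ≠ 0)
    -- `R̂` has the same degree and satisfies the same block conditions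
    (hRhdeg : ∀ l, N < l → Rhat.coeff l = 0)
    (hRhN0 : ∀ i j : Fin p, ((j : ℕ) < (i : ℕ) + r ∨ p - r ≤ (i : ℕ)) → Rhat.coeff N i j = 0)
    (hRhNd : ∀ i j : Fin p, (j : ℕ) = (i : ℕ) + r → Rhat.coeff N i j ≠ 0)
    (hRhN1z : ∀ i j : Fin p, (j : ℕ) < r → (j : ℕ) + (p - r) < (i : ℕ) →
      Rhat.coeff (N - 1) i j = 0)
    (hRhN1d : ∀ i j : Fin p, (j : ℕ) < r → (j : ℕ) + (p - r) = (i : ℕ) →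
      Rhat.coeff (N - 1) i j ≠ 0)
    -- the factorization `R̂(x) = R(x)·𝒜(x)`
    (hfact : Rhat = R * A) :
    A.natDegree = 0 ∧ (∀ i j : Fin p, (j : ℕ) < (i : ℕ) → A.coeff 0 i j = 0) ∧
      IsUnit (A.coeff 0) :=
  stmt0_general p N r hN hr R Rhat A hRdeg hRN0 hRNd hRN1z hRN1d hRhdeg hRhN0 hRhNd hRhN1z hRhN1d
    hfact
end

section
/- Under the hypotheses of the previous factorization setup (R and R̂ satisfying the leading/subleading block conditions with R̂ = R·𝒜 and 𝒜 constant upper triangular), if the leading matrix t̂_N of R̂ or the subleading matrix t̂_{N-1} of R̂ has a zero entry on its diagonal, then 𝒜 is upper triangular with a zero diagonal entry, hence non-invertible. -/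
/-- In the factorization setup `R̂ = R·𝒜` with `R` satisfying the block
conditions (invertible triangular blocks `t_N`, `t_{N-1}`), `R̂` satisfying the block
zero-structure, and `𝒜` constant upper triangular, if the leading matrix `t̂_N` of `R̂`
or the subleading matrix `t̂_{N-1}` of `R̂` has a zero entry on its diagonal, then `𝒜`
is upper triangular with a zero diagonal entry, hence non-invertible. -/
theorem stmt1 (p N r : ℕ) (hp : 1 ≤ p) (hN : 1 ≤ N) (hr : r ≤ p - 1)
    (R Rhat A : Polynomial (Matrix (Fin p) (Fin p) ℂ))
    -- `R` has degree `N`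
    (hRdeg : ∀ l, N < l → R.coeff l = 0)
    -- leading coefficient of `R`: block form `[[0, t_N],[0,0]]`, `t_N` upper triangular
    (hRN0 : ∀ i j : Fin p, ((j : ℕ) < (i : ℕ) + r ∨ p - r ≤ (i : ℕ)) → R.coeff N i j = 0)
    -- with nonzero diagonal (hence invertible)
    (hRNd : ∀ i j : Fin p, (j : ℕ) = (i : ℕ) + r → R.coeff N i j ≠ 0)
    -- subleading coefficient of `R`: lower-left block `t_{N-1}` upper triangular
    (hRN1z : ∀ i j : Fin p, (j : ℕ) < r → (j : ℕ) + (p - r) < (i : ℕ) →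
      R.coeff (N - 1) i j = 0)
    -- with nonzero diagonal (hence invertible)
    (hRN1d : ∀ i j : Fin p, (j : ℕ) < r → (j : ℕ) + (p - r) = (i : ℕ) →
      R.coeff (N - 1) i j ≠ 0)
    -- `R̂` has the same degree and the same block zero-structure
    (hRhdeg : ∀ l, N < l → Rhat.coeff l = 0)
    (hRhN0 : ∀ i j : Fin p, ((j : ℕ) < (i : ℕ) + r ∨ p - r ≤ (i : ℕ)) → Rhat.coeff N i j = 0)
    (hRhN1z : ∀ i j : Fin p, (j : ℕ) < r → (j : ℕ) + (p - r) < (i : ℕ) →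
      Rhat.coeff (N - 1) i j = 0)
    -- `t̂_N` or `t̂_{N-1}` has a zero entry on its diagonal
    (hzero : (∃ i j : Fin p, (j : ℕ) = (i : ℕ) + r ∧ Rhat.coeff N i j = 0) ∨
      (∃ i j : Fin p, (j : ℕ) < r ∧ (j : ℕ) + (p - r) = (i : ℕ) ∧ Rhat.coeff (N - 1) i j = 0))
    -- the factorization `R̂(x) = R(x)·𝒜(x)` with `𝒜` constant upper triangular
    (hfact : Rhat = R * A)
    (hAconst : A.natDegree = 0)
    (hAupper : ∀ i j : Fin p, (j : ℕ) < (i : ℕ) → A.coeff 0 i j = 0) :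
    (∃ i : Fin p, A.coeff 0 i i = 0) ∧ ¬ IsUnit (A.coeff 0) := by
  obtain ⟨a, hA⟩ := Polynomial.natDegree_eq_zero.mp hAconst
  have ha0 : A.coeff 0 = a := by rw [← hA, Polynomial.coeff_C_zero]
  have hAu : ∀ i j : Fin p, (j : ℕ) < (i : ℕ) → a i j = 0 := by
    intro i j h; rw [← ha0]; exact hAupper i j h
  have hcoef : ∀ n, Rhat.coeff n = R.coeff n * a := by
    intro n
    rw [hfact, ← hA, Polynomial.coeff_mul_C]
  have key : ∃ i : Fin p, a i i = 0 := by
    rcases hzero with ⟨i, j, hij, hz⟩ | ⟨i, j, hjr, hij, hz⟩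
    · refine ⟨j, ?_⟩
      rw [hcoef, Matrix.mul_apply] at hz
      rw [Finset.sum_eq_single j] at hz
      · have := hRNd i j hij
        exact (mul_eq_zero.mp hz).resolve_left this
      · intro k _ hk
        rcases lt_trichotomy (k : ℕ) (j : ℕ) with h | h | h
        · rw [hRN0 i k (Or.inl (by omega)), zero_mul]
        · exact absurd (Fin.ext h) hk
        · rw [hAu k j h, mul_zero]
      · intro h; exact absurd (Finset.mem_univ j) h
    · refine ⟨j, ?_⟩
      rw [hcoef, Matrix.mul_apply] at hz
      rw [Finset.sum_eq_single j] at hz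
      · have := hRN1d i j hjr hij
        exact (mul_eq_zero.mp hz).resolve_left this
      · intro k _ hk
        rcases lt_trichotomy (k : ℕ) (j : ℕ) with h | h | h
        · rw [hRN1z i k (by omega) (by omega), zero_mul]
        · exact absurd (Fin.ext h) hk
        · rw [hAu k j h, mul_zero]
      · intro h; exact absurd (Finset.mem_univ j) h
  obtain ⟨i, hi⟩ := key
  have hBT : a.BlockTriangular id := by
    intro k l hkl
    exact hAu k l hkl
  have hdet : a.det = 0 := by
    rw [Matrix.det_of_upperTriangular hBT]
    exact Finset.prod_eq_zero (Finset.mem_univ i) hi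
  constructor
  · exact ⟨i, by rw [ha0]; exact hi⟩
  · rw [ha0]
    intro h
    rw [Matrix.isUnit_iff_isUnit_det, hdet] at h
    exact not_isUnit_zero h
end

section
/- Let R(x) = Σ_{l=0}^{N} R_l x^l be a p×p matrix polynomial such that R_N = [[0_{(p-r)×r}, I_{p-r}],[0_{r×r}, 0_{r×(p-r)}]] and R_{N-1} = [[R¹, R²],[I_r, R⁴]] (blocks of the indicated sizes, arbitrary R¹, R², R⁴). Then det R(x) is a polynomial in x of degree exactly Np − r. -/
/-!
If `d i` bounds the degrees of the entries in row `i` of a polynomial matrix, every term of the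
Leibniz expansion of the determinant has degree at most `∑ d i`, and the coefficient of
`x ^ (∑ d i)` is the determinant of the matrix whose `i`-th row holds the `x ^ (d i)`-coefficients.
Here the last `r` rows of `R` have vanishing `x ^ N`-coefficients, so `d = (N, …, N, N - 1, …, N - 1)`
works, with `∑ d i = N p - r`, and the coefficient matrix is `[[0, I_{p-r}], [I_r, R⁴]]`, whose
determinant is `±1`.
-/

open Polynomial

namespace Polynomial

theorem coeff_prod_sum_of_natDegree_le {R ι : Type*} [CommSemiring R] (s : Finset ι)
    (f : ι → R[X]) (d : ι → ℕ) (h : ∀ i ∈ s, (f i).natDegree ≤ d i) :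
    (∏ i ∈ s, f i).coeff (∑ i ∈ s, d i) = ∏ i ∈ s, (f i).coeff (d i) := by
  classical
  induction s using Finset.induction_on with
  | empty => simp
  | insert a s ha ih =>
    simp only [Finset.forall_mem_insert] at h
    rw [Finset.prod_insert ha, Finset.sum_insert ha, Finset.prod_insert ha,
      coeff_mul_add_eq_of_natDegree_le h.1
        ((natDegree_prod_le _ _).trans (Finset.sum_le_sum h.2)), ih h.2]

end Polynomial

theorem Fin.exists_perm_val_eq_rotate {p r : ℕ} (hr : r ≤ p) :
    ∃ σ : Equiv.Perm (Fin p), ∀ k : Fin p,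
      (σ k : ℕ) = if (k : ℕ) < p - r then k + r else k - (p - r) := by
  refine ⟨(finCongr (by omega : p = (p - r) + r)).trans
    (finAddFlip.trans (finCongr (by omega))), fun ⟨k, hk⟩ => ?_⟩
  split_ifs with h
  · simp [finAddFlip_apply_mk_left h, Nat.add_comm]
  · simp [finAddFlip_apply_mk_right (not_lt.mp h)]

namespace Matrix

variable {n R : Type*} [Fintype n] [DecidableEq n] [CommRing R]

def rowCoeff (M : Matrix n n R[X]) (d : n → ℕ) : Matrix n n R :=
  of fun i j => (M i j).coeff (d i)

section RowDegree

variable (M : Matrix n n R[X]) (d : n → ℕ) (h : ∀ i j, (M i j).natDegree ≤ d i)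
include h

theorem natDegree_det_le_sum_of_natDegree_le : M.det.natDegree ≤ ∑ i, d i := by
  rw [det_apply']
  refine natDegree_sum_le_of_forall_le _ _ fun σ _ => ?_
  rw [← zero_add (∑ i, d i), ← Equiv.sum_comp σ d]
  exact natDegree_mul_le_of_le (natDegree_intCast _).le
    ((natDegree_prod_le _ _).trans (Finset.sum_le_sum fun i _ => h (σ i) i))

theorem coeff_det_sum_of_natDegree_le : M.det.coeff (∑ i, d i) = (M.rowCoeff d).det := by
  rw [det_apply', det_apply', finsetSum_coeff]
  refine Finset.sum_congr rfl fun σ _ => ?_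
  rw [coeff_intCast_mul, ← Equiv.sum_comp σ d,
    coeff_prod_sum_of_natDegree_le _ _ _ fun i _ => h (σ i) i]
  rfl

theorem degree_det_eq_sum_of_natDegree_le [Nontrivial R] (hM : (M.rowCoeff d).det ≠ 0) :
    M.det.degree = ∑ i, d i :=
  degree_eq_of_le_of_coeff_ne_zero
    ((degree_le_natDegree).trans (by exact_mod_cast natDegree_det_le_sum_of_natDegree_le M d h))
    (by rwa [coeff_det_sum_of_natDegree_le M d h])

end RowDegree

/-- Rotating the columns by `r` makes `A` unit lower triangular. -/
theorem isUnit_det_of_rotated_identity_blocks {p r : ℕ} (hr : r ≤ p) (A : Matrix (Fin p) (Fin p) R)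
    (hupper : ∀ i j : Fin p, (i : ℕ) < p - r → A i j = if (j : ℕ) = i + r then 1 else 0)
    (hlower : ∀ i j : Fin p, p - r ≤ (i : ℕ) → (j : ℕ) < r →
      A i j = if (j : ℕ) + (p - r) = i then 1 else 0) :
    IsUnit A.det := by
  obtain ⟨σ, hσ⟩ := Fin.exists_perm_val_eq_rotate hr
  have hentry : ∀ i k : Fin p, i ≤ k → A.submatrix id σ i k = if k = i then 1 else 0 := by
    intro i k hik
    have hk := hσ k
    rw [Fin.le_iff_val_le_val] at hik
    by_cases hi : (i : ℕ) < p - r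
    · rw [submatrix_apply, id, hupper _ _ hi]
      exact if_congr (by rw [Fin.ext_iff]; split_ifs at hk <;> omega) rfl rfl
    · rw [submatrix_apply, id, hlower _ _ (by omega) (by split_ifs at hk <;> omega)]
      exact if_congr (by rw [Fin.ext_iff]; split_ifs at hk <;> omega) rfl rfl
  have htri : (A.submatrix id σ).IsLowerTriangular := fun i k hik => by
    have hik : i < k := OrderDual.toDual_lt_toDual.mp hik
    rw [hentry i k hik.le, if_neg hik.ne']
  have hdet : (Equiv.Perm.sign σ : R) * A.det = 1 := by
    rw [← det_permute', det_of_isLowerTriangular _ htri]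
    exact Finset.prod_eq_one fun k _ => by simpa using hentry k k le_rfl
  exact IsUnit.of_mul_eq_one_right _ hdet

end Matrix

theorem stmt2_general (p N r : ℕ) (hr : r ≤ p - 1)
    (R : Matrix (Fin p) (Fin p) (Polynomial ℂ))
    -- every entry has degree at most `N`
    (hdeg : ∀ i j, (R i j).degree ≤ (N : WithBot ℕ))
    -- coefficient of `x^N` is `[[0_{(p-r)×r}, I_{p-r}],[0,0]]`
    (hRN : ∀ i j : Fin p, (R i j).coeff N = if (j : ℕ) = (i : ℕ) + r then 1 else 0)
    -- coefficient of `x^{N-1}` has lower-left `r×r` block equal to `I_r`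
    (hRN1 : ∀ i j : Fin p, p - r ≤ (i : ℕ) → (j : ℕ) < r →
      (R i j).coeff (N - 1) = if (j : ℕ) + (p - r) = (i : ℕ) then 1 else 0) :
    R.det.degree = ((N * p - r : ℕ) : WithBot ℕ) := by
  have hrp : r ≤ p := by omega
  set d : Fin p → ℕ := fun i => if (i : ℕ) < p - r then N else N - 1
  have hrow : ∀ i j, (R i j).natDegree ≤ d i := by
    intro i j
    have hN := natDegree_le_iff_degree_le.mpr (hdeg i j)
    by_cases hi : (i : ℕ) < p - r
    · simpa [d, hi] using hN
    · simp only [d, hi, if_false]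
      exact natDegree_le_pred hN (by rw [hRN, if_neg]; omega)
  have hsum : ∑ i, d i = N * p - r := by
    simp only [d]
    obtain ⟨q, rfl⟩ : ∃ q, p = q + r := ⟨p - r, by omega⟩
    rcases N with _ | N
    · simp
    · simpa [Fin.sum_univ_add] using Nat.eq_sub_of_add_eq (by ring)
  have hlead : IsUnit (R.rowCoeff d).det := by
    refine Matrix.isUnit_det_of_rotated_identity_blocks hrp _ (fun i j hi => ?_) fun i j hi hj => ?_
    · simp [Matrix.rowCoeff, d, hi, hRN]
    · simp [Matrix.rowCoeff, d, Nat.not_lt.mpr hi, hRN1 i j hi hj]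
  rw [← hsum, Matrix.degree_det_eq_sum_of_natDegree_le R d hrow hlead.ne_zero]

/-- If `R(x)` is a `p×p` matrix polynomial of degree `N` with
`R_N = [[0, I_{p-r}],[0,0]]` and `R_{N-1}` having lower-left `r×r` block `I_r`,
then `det R(x)` has degree exactly `Np − r`. -/
theorem stmt2 (p N r : ℕ) (hp : 1 ≤ p) (hN : 1 ≤ N) (hr : r ≤ p - 1)
    (R : Matrix (Fin p) (Fin p) (Polynomial ℂ))
    -- every entry has degree at most `N`
    (hdeg : ∀ i j, (R i j).degree ≤ (N : WithBot ℕ))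
    -- coefficient of `x^N` is `[[0_{(p-r)×r}, I_{p-r}],[0,0]]`
    (hRN : ∀ i j : Fin p, (R i j).coeff N = if (j : ℕ) = (i : ℕ) + r then 1 else 0)
    -- coefficient of `x^{N-1}` has lower-left `r×r` block equal to `I_r`
    (hRN1 : ∀ i j : Fin p, p - r ≤ (i : ℕ) → (j : ℕ) < r →
      (R i j).coeff (N - 1) = if (j : ℕ) + (p - r) = (i : ℕ) then 1 else 0) :
    R.det.degree = ((N * p - r : ℕ) : WithBot ℕ) :=
  stmt2_general p N r hr R hdeg hRN hRN1
end

section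
/- In the determinant expansion det R(x) = Σ_{σ ∈ S_p} sgn(σ) Π_i R(x)_{i,σ(i)}, for the permutation σ̃ defined by σ̃(i) = r+i for i ≤ p−r and σ̃(i) = i−(p−r) for i ≥ p−r+1, the corresponding summand sgn(σ̃)·Π_i R(x)_{i,σ̃(i)} is a polynomial with leading term x^{Np−r}, while every other permutation contributes a polynomial of degree strictly less than Np−r. -/
/-- In the determinant expansion of a matrix polynomial `R(x)` of degree `N`
with leading coefficient `[[0, I_{p-r}],[0,0]]` and subleading coefficient with lower-left
block `I_r`, the summand corresponding to the permutation `σ̃(i) = (i + r) mod p` is a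
polynomial with leading term `x^{Np−r}` (its signed version has degree `Np−r` and the
product is monic of that degree), while every other permutation contributes a polynomial
of degree strictly less than `Np−r`. -/
theorem stmt3 (p N r : ℕ) (hp : 1 ≤ p) (hN : 1 ≤ N) (hr : r ≤ p - 1)
    (R : Matrix (Fin p) (Fin p) (Polynomial ℂ))
    -- entries have degree at most `N`
    (hdeg : ∀ i j, (R i j).degree ≤ (N : WithBot ℕ))
    -- coefficient of `x^N` vanishes off the positions `(i, i+r)`
    (hcoeffN : ∀ i j : Fin p, (j : ℕ) ≠ (i : ℕ) + r → (R i j).coeff N = 0)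
    -- coefficient of `x^{N-1}` vanishes strictly below the lower-left identity diagonal
    (hcoeffN1 : ∀ i j : Fin p, (j : ℕ) + (p - r) < (i : ℕ) → (R i j).coeff (N - 1) = 0)
    -- for `i ≤ p−r` (0-based: `i < p−r`), `R(x)_{i, i+r}` is monic of degree `N`
    (hmonN : ∀ i j : Fin p, (j : ℕ) = (i : ℕ) + r →
      (R i j).Monic ∧ (R i j).natDegree = N)
    -- for `i > p−r` (0-based: `i ≥ p−r`), `R(x)_{i, i−(p−r)}` is monic of degree `N−1`
    (hmonN1 : ∀ i j : Fin p, (j : ℕ) + (p - r) = (i : ℕ) →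
      (R i j).Monic ∧ (R i j).natDegree = N - 1)
    -- `σ` is the permutation `σ̃ : i ↦ r + i (mod p)`
    (σ : Equiv.Perm (Fin p)) (hσ : ∀ i : Fin p, ((σ i : Fin p) : ℕ) = ((i : ℕ) + r) % p) :
    (∏ i, R i (σ i)).Monic ∧ (∏ i, R i (σ i)).natDegree = N * p - r ∧
      ((Equiv.Perm.sign σ : ℤ) • ∏ i, R i (σ i)).degree = ((N * p - r : ℕ) : WithBot ℕ) ∧
      ∀ τ : Equiv.Perm (Fin p), τ ≠ σ →
        (∏ i, R i (τ i)).degree < ((N * p - r : ℕ) : WithBot ℕ) := by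
  have hrp : r + 1 ≤ p := by omega
  -- description of σ in the two regimes
  have hσ' : ∀ i : Fin p,
      ((i : ℕ) + r < p ∧ ((σ i : Fin p) : ℕ) = (i : ℕ) + r) ∨
      (p ≤ (i : ℕ) + r ∧ ((σ i : Fin p) : ℕ) + (p - r) = (i : ℕ)) := by
    intro i
    have h := hσ i
    by_cases hc : (i : ℕ) + r < p
    · exact Or.inl ⟨hc, by rw [h, Nat.mod_eq_of_lt hc]⟩
    · right
      refine ⟨le_of_not_gt hc, ?_⟩
      have h2 : ((i : ℕ) + r) % p = (i : ℕ) + r - p := by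
        rw [Nat.mod_eq_sub_mod (le_of_not_gt hc),
          Nat.mod_eq_of_lt (by have := i.isLt; omega)]
      rw [h2] at h
      have := i.isLt
      omega
  have hfac : ∀ i : Fin p, (R i (σ i)).Monic ∧
      (R i (σ i)).natDegree = (if (i : ℕ) + r < p then N else N - 1) := by
    intro i
    rcases hσ' i with ⟨h1, h2⟩ | ⟨h1, h2⟩
    · rw [if_pos h1]; exact hmonN i (σ i) h2
    · rw [if_neg (by omega)]; exact hmonN1 i (σ i) h2
  have hmonicP : (∏ i, R i (σ i)).Monic :=
    Polynomial.monic_prod_of_monic _ _ (fun i _ => (hfac i).1)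
  -- natDegree computation
  have hdegP : (∏ i, R i (σ i)).natDegree = N * p - r := by
    rw [Polynomial.natDegree_prod_of_monic _ _ (fun i _ => (hfac i).1)]
    calc ∑ i, (R i (σ i)).natDegree
        = ∑ i : Fin p, (if (i : ℕ) + r < p then N else N - 1) :=
          Finset.sum_congr rfl (fun i _ => (hfac i).2)
      _ = ∑ j ∈ Finset.range p, (if j + r < p then N else N - 1) :=
          Fin.sum_univ_eq_sum_range (fun j => if j + r < p then N else N - 1) p
      _ = N * p - r := by
          rw [Finset.sum_ite, Finset.sum_const, Finset.sum_const]
          have e1 : (Finset.range p).filter (fun j => j + r < p) = Finset.range (p - r) := by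
            ext j
            simp only [Finset.mem_filter, Finset.mem_range]
            omega
          have e2 : (Finset.range p).filter (fun j => ¬ j + r < p) = Finset.Ico (p - r) p := by
            ext j
            simp only [Finset.mem_filter, Finset.mem_range, Finset.mem_Ico]
            omega
          rw [e1, e2, Finset.card_range, Nat.card_Ico, smul_eq_mul, smul_eq_mul]
          obtain ⟨M, rfl⟩ : ∃ M, N = M + 1 := ⟨N - 1, by omega⟩
          obtain ⟨s, rfl⟩ : ∃ s, p = r + s := ⟨p - r, by omega⟩
          have e3 : r + s - r = s := by omega
          rw [e3]
          simp only [Nat.add_sub_cancel]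
          have h2 : r ≤ (M + 1) * (r + s) := by nlinarith
          rw [eq_comm, Nat.sub_eq_iff_eq_add h2]
          ring
  have hne : (∏ i, R i (σ i)) ≠ 0 := hmonicP.ne_zero
  refine ⟨hmonicP, hdegP, ?_, ?_⟩
  · have hd : (∏ i, R i (σ i)).degree = ((N * p - r : ℕ) : WithBot ℕ) := by
      rw [Polynomial.degree_eq_natDegree hne, hdegP]
    rcases Int.units_eq_one_or (Equiv.Perm.sign σ) with h | h <;> rw [h]
    · simpa using hd
    · have : (((-1 : ℤˣ) : ℤ) • ∏ i, R i (σ i)) = -(∏ i, R i (σ i)) := by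
        simp
      rw [this, Polynomial.degree_neg]
      exact hd
  -- the strict bound for all other permutations
  · intro τ hτ
    by_cases hz : (∏ i, R i (τ i)) = 0
    · rw [hz, Polynomial.degree_zero]
      exact_mod_cast WithBot.bot_lt_coe _
    · have hfne : ∀ i : Fin p, R i (τ i) ≠ 0 := by
        intro i hi
        exact hz (Finset.prod_eq_zero (Finset.mem_univ i) hi)
      -- the "penalty" function
      set c : Fin p → ℕ := fun i =>
        if ((τ i : Fin p) : ℕ) = (i : ℕ) + r then 0
        else if ((τ i : Fin p) : ℕ) + (p - r) < (i : ℕ) then 2 else 1 with hc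
      have key : ∀ i : Fin p, (R i (τ i)).natDegree + c i ≤ N := by
        intro i
        have hdN : (R i (τ i)).natDegree ≤ N :=
          Polynomial.natDegree_le_iff_degree_le.mpr (hdeg i (τ i))
        have hl : (R i (τ i)).coeff ((R i (τ i)).natDegree) ≠ 0 := by
          rw [← Polynomial.leadingCoeff]
          exact Polynomial.leadingCoeff_ne_zero.mpr (hfne i)
        by_cases h1 : ((τ i : Fin p) : ℕ) = (i : ℕ) + r
        · simp only [hc, if_pos h1]
          omega
        · have hNe : (R i (τ i)).natDegree ≠ N := by
            intro hEq
            rw [hEq] at hl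
            exact hl (hcoeffN i (τ i) h1)
          by_cases h2 : ((τ i : Fin p) : ℕ) + (p - r) < (i : ℕ)
          · have hNe1 : (R i (τ i)).natDegree ≠ N - 1 := by
              intro hEq
              rw [hEq] at hl
              exact hl (hcoeffN1 i (τ i) h2)
            simp only [hc, if_neg h1, if_pos h2]
            omega
          · simp only [hc, if_neg h1, if_neg h2]
            omega
      -- the lower-right block L
      set L : Finset (Fin p) := Finset.univ.filter (fun i : Fin p => p ≤ (i : ℕ) + r) with hLdef
      have hcard : L.card = r := by
        rw [hLdef, Finset.card_filter]
        rw [Fin.sum_univ_eq_sum_range (fun j => if p ≤ j + r then 1 else 0) p]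
        rw [← Finset.card_filter]
        have e : (Finset.range p).filter (fun j => p ≤ j + r) = Finset.Ico (p - r) p := by
          ext j
          simp only [Finset.mem_filter, Finset.mem_range, Finset.mem_Ico]
          omega
        rw [e, Nat.card_Ico]
        omega
      have hL1 : ∀ i ∈ L, 1 ≤ c i := by
        intro i hi
        have hiL : p ≤ (i : ℕ) + r := (Finset.mem_filter.mp hi).2
        have hτi : ((τ i : Fin p) : ℕ) ≠ (i : ℕ) + r := by
          have := (τ i).isLt
          omega
        simp only [hc, if_neg hτi]
        split <;> omega
      have hsumc : r + 1 ≤ ∑ i, c i := by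
        by_cases hA : ∀ i : Fin p, (i : ℕ) + r < p → τ i = σ i
        · -- τ agrees with σ on the upper block; find a c = 2 entry in L
          have hneg : ∃ i ∈ L, ((τ i : Fin p) : ℕ) + (p - r) < (i : ℕ) := by
            by_contra hcon
            push_neg at hcon
            apply hτ
            -- sums over the complement L'
            set L' : Finset (Fin p) :=
              Finset.univ.filter (fun i : Fin p => ¬ p ≤ (i : ℕ) + r) with hL'def
            have hcard' : L'.card = p - r := by
              have := Finset.card_filter_add_card_filter_not
                (s := (Finset.univ : Finset (Fin p)))
                (p := fun i : Fin p => p ≤ (i : ℕ) + r)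
              rw [Finset.card_univ, Fintype.card_fin] at this
              rw [hL'def]
              rw [hLdef] at hcard
              omega
            have hsum1 : ∑ i ∈ L', ((τ i : Fin p) : ℕ) = ∑ i ∈ L', ((i : ℕ) + r) := by
              apply Finset.sum_congr rfl
              intro i hi
              have hi' : (i : ℕ) + r < p := by
                have := (Finset.mem_filter.mp hi).2
                omega
              rw [hA i hi']
              rcases hσ' i with ⟨_, h⟩ | ⟨h, _⟩
              · exact h
              · omega
            have htot : ∑ i, ((τ i : Fin p) : ℕ) = ∑ i : Fin p, (i : ℕ) :=
              Equiv.sum_comp τ (fun i : Fin p => (i : ℕ))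
            have hsplitτ : (∑ i ∈ L, ((τ i : Fin p) : ℕ)) + ∑ i ∈ L', ((τ i : Fin p) : ℕ)
                = ∑ i, ((τ i : Fin p) : ℕ) :=
              Finset.sum_filter_add_sum_filter_not _ _ _
            have hspliti : (∑ i ∈ L, ((i : ℕ))) + ∑ i ∈ L', ((i : ℕ))
                = ∑ i : Fin p, (i : ℕ) :=
              Finset.sum_filter_add_sum_filter_not _ _ _
            have hsumL' : ∑ i ∈ L', ((i : ℕ) + r) = (∑ i ∈ L', (i : ℕ)) + (p - r) * r := by
              rw [Finset.sum_add_distrib, Finset.sum_const, hcard', smul_eq_mul]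
            -- derive the key sum equality over L
            have heq : ∑ i ∈ L, ((i : ℕ)) = ∑ i ∈ L, (((τ i : Fin p) : ℕ) + (p - r)) := by
              rw [Finset.sum_add_distrib, Finset.sum_const, hcard, smul_eq_mul]
              set K := (p - r) * r with hK
              have hK2 : r * (p - r) = K := by rw [hK]; ring
              rw [hK2]
              rw [hsum1, hsumL'] at hsplitτ
              set A := ∑ i ∈ L, ((τ i : Fin p) : ℕ)
              set B := ∑ i ∈ L', ((i : ℕ))
              set C := ∑ i ∈ L, ((i : ℕ))
              set D := ∑ i : Fin p, (i : ℕ)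
              omega
            have hpt := (Finset.sum_eq_sum_iff_of_le
              (fun i hi => hcon i hi)).mp heq
            apply Equiv.ext
            intro i
            by_cases hi : (i : ℕ) + r < p
            · exact hA i hi
            · have hiL : i ∈ L := by
                rw [hLdef]
                simp only [Finset.mem_filter, Finset.mem_univ, true_and]
                omega
              have h1 := hpt i hiL
              have h2 : ((σ i : Fin p) : ℕ) + (p - r) = (i : ℕ) := by
                rcases hσ' i with ⟨h, _⟩ | ⟨_, h⟩
                · omega
                · exact h
              exact Fin.val_injective (by omega)
          obtain ⟨i₀, hi₀L, hi₀⟩ := hneg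
          have hpr1 : 1 ≤ p - r := by omega
          have hc2 : c i₀ = 2 := by
            have hτi : ((τ i₀ : Fin p) : ℕ) ≠ (i₀ : ℕ) + r := by omega
            simp only [hc, if_neg hτi, if_pos hi₀]
          have hr1 : 1 ≤ r := by
            have := (Finset.mem_filter.mp hi₀L).2
            have := i₀.isLt
            omega
          have h1 : ∑ i ∈ L, c i ≤ ∑ i, c i :=
            Finset.sum_le_sum_of_subset (Finset.subset_univ _)
          rw [← Finset.add_sum_erase L c hi₀L] at h1
          have h2 : (L.erase i₀).card • 1 ≤ ∑ i ∈ L.erase i₀, c i :=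
            Finset.card_nsmul_le_sum _ _ _
              (fun i hi => hL1 i (Finset.mem_of_mem_erase hi))
          rw [Finset.card_erase_of_mem hi₀L, hcard, smul_eq_mul, mul_one] at h2
          omega
        · push_neg at hA
          obtain ⟨i₀, hi₀p, hi₀⟩ := hA
          have hσval : ((σ i₀ : Fin p) : ℕ) = (i₀ : ℕ) + r := by
            rcases hσ' i₀ with ⟨_, h⟩ | ⟨h, _⟩
            · exact h
            · omega
          have hτi : ((τ i₀ : Fin p) : ℕ) ≠ (i₀ : ℕ) + r := by
            intro h
            exact hi₀ (Fin.val_injective (by omega))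
          have hci₀ : 1 ≤ c i₀ := by
            simp only [hc, if_neg hτi]
            split <;> omega
          have hnotmem : i₀ ∉ L := by
            rw [hLdef]
            simp only [Finset.mem_filter, Finset.mem_univ, true_and]
            omega
          have h1 : ∑ i ∈ insert i₀ L, c i ≤ ∑ i, c i :=
            Finset.sum_le_sum_of_subset (Finset.subset_univ _)
          rw [Finset.sum_insert hnotmem] at h1
          have h2 : L.card • 1 ≤ ∑ i ∈ L, c i :=
            Finset.card_nsmul_le_sum _ _ _ hL1
          rw [hcard, smul_eq_mul, mul_one] at h2
          omega
      -- put everything together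
      have hsum_dc : ∑ i, ((R i (τ i)).natDegree + c i) ≤ ∑ _i : Fin p, N :=
        Finset.sum_le_sum (fun i _ => key i)
      rw [Finset.sum_add_distrib, Finset.sum_const, Finset.card_univ, Fintype.card_fin,
        smul_eq_mul] at hsum_dc
      have hnd : (∏ i, R i (τ i)).natDegree = ∑ i, (R i (τ i)).natDegree :=
        Polynomial.natDegree_prod _ _ (fun i _ => hfne i)
      rw [Polynomial.degree_eq_natDegree hz, hnd]
      have hlt : ∑ i, (R i (τ i)).natDegree < N * p - r := by
        rw [Nat.mul_comm p N] at hsum_dc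
        set K := N * p
        omega
      exact_mod_cast hlt
end

section
/- Let R(x) = Σ_{l=0}^{N} R_l x^l be a p×p matrix polynomial with R_N = [[0_{(p-r)×r}, I_{p-r}],[0,0]] and R_{N-1} having lower-left r×r block equal to I_r. Then the semi-infinite matrix R(Λ_{[p]}^⊤), viewed as a scalar semi-infinite matrix, is lower triangular banded with exactly Np − r nonzero subdiagonals; i.e. its (i,j) entry vanishes whenever i − j > Np − r, and some entry with i − j = Np − r is nonzero. -/
/-- If `R(x)` is a `p×p` matrix polynomial of degree `N` with
`R_N = [[0, I_{p-r}],[0,0]]` and `R_{N-1}` having lower-left `r×r` block `I_r`, then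
`R(Λ_{[p]}^⊤)`, viewed as a scalar semi-infinite matrix, is lower triangular banded with
exactly `Np − r` nonzero subdiagonals: its `(i,j)` entry vanishes whenever `i − j > Np − r`,
and some entry with `i − j = Np − r` is nonzero. -/
theorem stmt7 (p N r : ℕ) (hp : 0 < p) (hN : 1 ≤ N) (hr : r ≤ p - 1)
    (R : ℕ → Matrix (Fin p) (Fin p) ℂ)
    (hR : ∀ l, N < l → R l = 0)
    -- `R_N = [[0_{(p-r)×r}, I_{p-r}],[0,0]]`
    (hRN : ∀ i j : Fin p, R N i j = if (j : ℕ) = (i : ℕ) + r then 1 else 0)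
    -- lower-left `r×r` block of `R_{N-1}` equals `I_r`
    (hRN1 : ∀ i j : Fin p, p - r ≤ (i : ℕ) → (j : ℕ) < r →
      R (N - 1) i j = if (j : ℕ) + (p - r) = (i : ℕ) then 1 else 0)
    -- `E = R(Λ_{[p]}^⊤)` in scalar indices `i = pm + a`, `j = pn + b`
    (E : Matrix ℕ ℕ ℂ)
    (hE : ∀ i j : ℕ, E i j = if j / p ≤ i / p then
        R (i / p - j / p) ⟨i % p, Nat.mod_lt i hp⟩ ⟨j % p, Nat.mod_lt j hp⟩ else 0) :
    (∀ i j : ℕ, j + (N * p - r) < i → E i j = 0) ∧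
      ∃ i j : ℕ, i = j + (N * p - r) ∧ E i j ≠ 0 := by
  obtain ⟨N', rfl⟩ : ∃ N', N = N' + 1 := ⟨N - 1, by omega⟩
  have hrp : r < p := by omega
  have hPN : (N' + 1) * p = p * N' + p := by ring
  constructor
  · intro i j hij
    rw [hE]
    split_ifs with hmn
    · have ha' : i % p < p := Nat.mod_lt i hp
      have hb' : j % p < p := Nat.mod_lt j hp
      have hi : p * (i / p) + i % p = i := Nat.div_add_mod i p
      have hj : p * (j / p) + j % p = j := Nat.div_add_mod j p
      have hmul : p * (i / p) = p * (j / p) + p * (i / p - j / p) := by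
        rw [← Nat.mul_add, Nat.add_sub_cancel' hmn]
      have hkey : i + j % p = j + p * (i / p - j / p) + i % p := by omega
      rcases Nat.lt_or_ge (N' + 1) (i / p - j / p) with hc | hc
      · rw [hR _ hc]; rfl
      · rcases Nat.eq_or_lt_of_le hc with hc1 | hc1
        · -- i/p - j/p = N'+1
          have hAB : p * (i / p - j / p) = (N' + 1) * p := by rw [hc1]; ring
          rw [hc1, hRN]
          rw [if_neg]
          intro hab
          have hab' : j % p = i % p + r := hab
          omega
        · -- i/p - j/p ≤ N'
          have hlN : i / p - j / p ≤ N' := by omega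
          have hbound : p * (i / p - j / p) ≤ p * N' := Nat.mul_le_mul_left p hlN
          by_cases hl2 : i / p - j / p = N'
          · have hA : p * (i / p - j / p) = p * N' := by rw [hl2]
            have hage : p - r ≤ i % p := by omega
            have hblt : j % p < r := by omega
            have hv := hRN1 ⟨i % p, ha'⟩ ⟨j % p, hb'⟩ hage hblt
            simp only [Nat.add_sub_cancel] at hv
            rw [hl2, hv, if_neg]
            intro hne
            have hne' : j % p + (p - r) = i % p := hne
            omega
          · have hlN2 : i / p - j / p + 1 ≤ N' := by omega
            have hbound2 : p * (i / p - j / p + 1) ≤ p * N' :=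
              Nat.mul_le_mul_left p hlN2
            have hb3 : p * (i / p - j / p) + p = p * (i / p - j / p + 1) := by ring
            exfalso
            omega
    · rfl
  · refine ⟨(N' + 1) * p, r, ?_, ?_⟩
    · omega
    · rw [hE]
      have h1 : (N' + 1) * p / p = N' + 1 := Nat.mul_div_cancel _ hp
      have h2 : (N' + 1) * p % p = 0 := Nat.mul_mod_left _ _
      have h3 : r / p = 0 := Nat.div_eq_of_lt hrp
      have h4 : r % p = r := Nat.mod_eq_of_lt hrp
      rw [if_pos (by omega)]
      have heq : R ((N' + 1) * p / p - r / p) ⟨(N' + 1) * p % p, Nat.mod_lt _ hp⟩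
          ⟨r % p, Nat.mod_lt r hp⟩ =
          R (N' + 1) ⟨0, hp⟩ ⟨r, hrp⟩ := by
        congr 1 <;> simp [h1, h2, h3, h4]
      rw [heq, hRN]
      simp
end

section
/- Let S and Ŝ be semi-infinite lower unitriangular matrices, S̄ and S̄̂ lower unitriangular, H and Ĥ invertible diagonal, and let T be a semi-infinite lower triangular banded matrix with at most M nonzero subdiagonals. If S Ŝ^{-1} = H S̄^{-⊤} T S̄̂^{⊤} Ĥ^{-1}, then Ω := S Ŝ^{-1} is a lower unitriangular banded matrix with at most M subdiagonals: Ω_{i,i} = 1, Ω_{i,j} = 0 for j > i, and Ω_{i,j} = 0 for i − j > M. -/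
/-- The (locally finite) product of semi-infinite matrices. -/
noncomputable def mulInf (A B : ℕ → ℕ → ℂ) : ℕ → ℕ → ℂ :=
  fun i j => ∑' k, A i k * B k j

/-- A semi-infinite matrix is lower unitriangular. -/
def LowerUni (A : ℕ → ℕ → ℂ) : Prop :=
  (∀ i, A i i = 1) ∧ ∀ i j, i < j → A i j = 0

/-- Let `S`, `Ŝ` be lower unitriangular semi-infinite matrices (with `Ŝ⁻¹`
lower unitriangular two-sided inverse of `Ŝ`), `S̄`, `S̄̂` lower unitriangular, `H`, `Ĥ`
invertible diagonal, and `T` lower triangular banded with at most `M` nonzero subdiagonals.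
If `S Ŝ⁻¹ = H S̄⁻ᵀ T S̄̂ᵀ Ĥ⁻¹` (where `U = S̄⁻ᵀ` is upper unitriangular), then
`Ω := S Ŝ⁻¹` is lower unitriangular and banded with at most `M` subdiagonals. -/
theorem stmt12 (M : ℕ) (S Sh Shinv Sb Sbh T U : ℕ → ℕ → ℂ) (H Hh : ℕ → ℂ)
    (hS : LowerUni S) (hSh : LowerUni Sh) (hShinv : LowerUni Shinv)
    (hShr : mulInf Sh Shinv = fun i j => if i = j then 1 else 0)
    (hShl : mulInf Shinv Sh = fun i j => if i = j then 1 else 0)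
    (hSb : LowerUni Sb) (hSbh : LowerUni Sbh)
    -- `U` is upper unitriangular
    (hU : (∀ i, U i i = 1) ∧ ∀ i j, j < i → U i j = 0)
    -- `U` is the transpose of the inverse of `S̄`: `S̄ Uᵀ = I`
    (hUinv : mulInf Sb (fun i j => U j i) = fun i j => if i = j then 1 else 0)
    -- `H`, `Ĥ` invertible diagonal matrices (given by their diagonal entries)
    (hH : ∀ k, H k ≠ 0) (hHh : ∀ k, Hh k ≠ 0)
    -- `T` lower triangular banded with at most `M` nonzero subdiagonals
    (hT : ∀ i j, (i < j ∨ j + M < i) → T i j = 0)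
    -- the identity `S Ŝ⁻¹ = H S̄⁻ᵀ T S̄̂ᵀ Ĥ⁻¹`
    (heq : mulInf S Shinv = fun i j =>
      H i * mulInf (mulInf U T) (fun a b => Sbh b a) i j * (Hh j)⁻¹) :
    LowerUni (mulInf S Shinv) ∧ ∀ i j, j + M < i → mulInf S Shinv i j = 0 :=
  by
  constructor
  · constructor
    · intro i
      show ∑' k, S i k * Shinv k i = 1
      rw [tsum_eq_single i]
      · rw [hS.1, hShinv.1]; ring
      · intro k hk
        rcases lt_or_gt_of_ne hk with h | h
        · rw [hShinv.2 k i h, mul_zero]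
        · rw [hS.2 i k h, zero_mul]
    · intro i j hij
      show ∑' k, S i k * Shinv k j = 0
      have h0 : (fun k => S i k * Shinv k j) = fun _ => 0 := by
        funext k
        rcases lt_or_ge k j with h | h
        · rw [hShinv.2 k j h, mul_zero]
        · rw [hS.2 i k (lt_of_lt_of_le hij h), zero_mul]
      rw [h0, tsum_zero]
  · intro i j hij
    have key : mulInf (mulInf U T) (fun a b => Sbh b a) i j = 0 := by
      show ∑' k, mulInf U T i k * Sbh j k = 0
      have h0 : (fun k => mulInf U T i k * Sbh j k) = fun _ => 0 := by
        funext k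
        rcases lt_or_ge j k with h | h
        · rw [hSbh.2 j k h, mul_zero]
        · have h1 : (fun l => U i l * T l k) = fun _ => 0 := by
            funext l
            rcases lt_or_ge l i with h2 | h2
            · rw [hU.2 i l h2, zero_mul]
            · rw [hT l k (Or.inr (by omega)), mul_zero]
          show (∑' l, U i l * T l k) * Sbh j k = 0
          rw [h1, tsum_zero, zero_mul]
      rw [h0, tsum_zero]
    have := congrFun (congrFun heq i) j
    rw [this, key, mul_zero, zero_mul]
end
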